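/- Let t ≥ 0 and let u*(t) = (x*, y*) be a local minimizer over a convex set K of the penalized objective F(x,y) = c·x + d·y + t·p(x), where p(x) = Σ_{i=1}^n min(x_i, 1-x_i). Then c·x* + d·y* + t·l_{u*}(x*) ≤ c·x + d·y + t·l_{u*}(x) for all (x,y) ∈ K, where l_{u*} is the affine function associated with u*. -/

import Mathlib

/-!
The affine function `G u = c·x + d·y + t·l_{u*}(x)` majorizes the penalized objective `F` on the
whole space, because `min (x i) (1 - x i)` is at most either argument and `t ≥ 0`, and it agrees
with `F` at `u*`. Hence `u*` is also a local minimizer of `G` over `K`, and a local minimizer of a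
convex function over a convex set is a global one.
-/

open Finset Set

section SumMin

variable {ι M : Type*} [AddCommMonoid M] [LinearOrder M]

theorem Finset.sum_min_le_sum_filter_add_sum_filter_not [IsOrderedAddMonoid M] (s : Finset ι)
    (p : ι → Prop) [DecidablePred p] (f g : ι → M) :
    ∑ i ∈ s, min (f i) (g i) ≤ ∑ i ∈ s with p i, f i + ∑ i ∈ s with ¬p i, g i := by
  rw [← sum_filter_add_sum_filter_not s p]
  gcongr with i _ i _
  · exact min_le_left _ _
  · exact min_le_right _ _

theorem Finset.sum_min_eq_sum_filter_add_sum_filter_not (s : Finset ι) (p : ι → Prop)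
    [DecidablePred p] {f g : ι → M} (hp : ∀ i ∈ s, p i → f i ≤ g i)
    (hnp : ∀ i ∈ s, ¬p i → g i ≤ f i) :
    ∑ i ∈ s, min (f i) (g i) = ∑ i ∈ s with p i, f i + ∑ i ∈ s with ¬p i, g i := by
  rw [← sum_filter_add_sum_filter_not s p]
  congr 1 <;> refine sum_congr rfl fun i hi => ?_ <;> rw [mem_filter] at hi
  · exact min_eq_left (hp i hi.1 hi.2)
  · exact min_eq_right (hnp i hi.1 hi.2)

end SumMin

section Convexity

variable {𝕜 E β ι : Type*} [Semiring 𝕜] [PartialOrder 𝕜] [AddCommMonoid E] [SMul 𝕜 E]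
  [AddCommMonoid β] [PartialOrder β] [IsOrderedAddMonoid β] [Module 𝕜 β] {s : Set E}

theorem convexOn_sum {t : Finset ι} {f : ι → E → β} (hs : Convex 𝕜 s)
    (hf : ∀ i ∈ t, ConvexOn 𝕜 s (f i)) : ConvexOn 𝕜 s fun x => ∑ i ∈ t, f i x := by
  classical
  induction t using Finset.induction_on with
  | empty => simpa using convexOn_const (0 : β) hs
  | insert i t hi ih =>
    simp_rw [sum_insert hi]
    exact (hf i (mem_insert_self i t)).add (ih fun j hj => hf j (mem_insert_of_mem hj))

end Convexity

section LocalMin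

theorem IsLocalMinOn.of_le_of_eq {α β : Type*} [TopologicalSpace α] [Preorder β]
    {f g : α → β} {s : Set α} {a : α} (hf : IsLocalMinOn f s a) (hfg : ∀ x ∈ s, f x ≤ g x)
    (ha : g a = f a) : IsLocalMinOn g s a := by
  filter_upwards [hf, self_mem_nhdsWithin] with x hx hxs
  exact ha.trans_le (hx.trans (hfg x hxs))

theorem isLocalMinOn_iff_norm_sub {E β : Type*} [SeminormedAddCommGroup E] [Preorder β]
    {f : E → β} {s : Set E} {a : E} :
    IsLocalMinOn f s a ↔ ∃ r > 0, ∀ x ∈ s, ‖x - a‖ < r → f a ≤ f x := by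
  simp only [IsLocalMinOn, IsMinFilter, eventually_nhdsWithin_iff, Metric.eventually_nhds_iff,
    dist_eq_norm]
  exact exists_congr fun r => and_congr_right fun _ => forall_congr' fun x => forall_comm

end LocalMin

section Penalty

variable {ι : Type*} [Fintype ι]

noncomputable def penalty (x : ι → ℝ) : ℝ := ∑ i, min (x i) (1 - x i)

/-- The affine function `l_{u*}` attached to `u* = (xs, _)`, with `J0 = {i | xs i ≤ 1/2}`. -/
noncomputable def penaltyLinearization (xs x : ι → ℝ) : ℝ :=
  ∑ i ∈ univ.filter (fun i => xs i ≤ 1/2), x i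
    + ∑ j ∈ univ.filter (fun j => ¬ xs j ≤ 1/2), (1 - x j)

theorem penalty_le_penaltyLinearization (xs x : ι → ℝ) :
    penalty x ≤ penaltyLinearization xs x :=
  sum_min_le_sum_filter_add_sum_filter_not _ _ _ _

theorem penaltyLinearization_self (xs : ι → ℝ) : penaltyLinearization xs xs = penalty xs :=
  (sum_min_eq_sum_filter_add_sum_filter_not _ _ (fun _ _ h => by linarith)
    (fun _ _ h => by linarith [not_le.1 h])).symm

theorem convexOn_penaltyLinearization (xs : ι → ℝ) {s : Set (ι → ℝ)} (hs : Convex ℝ s) :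
    ConvexOn ℝ s (penaltyLinearization xs) :=
  (convexOn_sum hs fun i _ => (LinearMap.proj i).convexOn hs).add
    (convexOn_sum hs fun i _ => (convexOn_const 1 hs).sub ((LinearMap.proj i).concaveOn hs))

end Penalty

theorem stmt_6_general (n q : ℕ)
    (c : Fin n → ℝ) (d : Fin q → ℝ) (t : ℝ) (ht : 0 ≤ t)
    (K : Set ((Fin n → ℝ) × (Fin q → ℝ)))
    (hKconv : Convex ℝ K)
    (xs : Fin n → ℝ) (ys : Fin q → ℝ) (hu : (xs, ys) ∈ K)
    (hloc : ∃ r > (0:ℝ), ∀ u ∈ K, ‖u - (xs, ys)‖ < r →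
      (∑ i, c i * xs i) + (∑ j, d j * ys j) + t * ∑ i, min (xs i) (1 - xs i)
        ≤ (∑ i, c i * u.1 i) + (∑ j, d j * u.2 j) + t * ∑ i, min (u.1 i) (1 - u.1 i)) :
    ∀ u ∈ K,
      (∑ i, c i * xs i) + (∑ j, d j * ys j)
        + t * (∑ i ∈ univ.filter (fun i => xs i ≤ 1/2), xs i
            + ∑ j ∈ univ.filter (fun j => ¬ xs j ≤ 1/2), (1 - xs j))
      ≤ (∑ i, c i * u.1 i) + (∑ j, d j * u.2 j)
        + t * (∑ i ∈ univ.filter (fun i => xs i ≤ 1/2), u.1 i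
            + ∑ j ∈ univ.filter (fun j => ¬ xs j ≤ 1/2), (1 - u.1 j)) := by
  let linear (u : (Fin n → ℝ) × (Fin q → ℝ)) : ℝ := (∑ i, c i * u.1 i) + ∑ j, d j * u.2 j
  have hF : IsLocalMinOn (fun u => linear u + t * penalty u.1) K (xs, ys) :=
    isLocalMinOn_iff_norm_sub.2 hloc
  have hG : IsLocalMinOn (fun u => linear u + t * penaltyLinearization xs u.1) K (xs, ys) :=
    hF.of_le_of_eq (fun u _ => by grw [penalty_le_penaltyLinearization xs u.1])
      (by rw [penaltyLinearization_self])
  have hlinear : ConvexOn ℝ K linear :=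
    (convexOn_sum hKconv fun i _ =>
      (c i • (LinearMap.proj i ∘ₗ LinearMap.fst ℝ _ _)).convexOn hKconv).add
    (convexOn_sum hKconv fun j _ =>
      (d j • (LinearMap.proj j ∘ₗ LinearMap.snd ℝ _ _)).convexOn hKconv)
  have hG_convex : ConvexOn ℝ K (fun u => linear u + t * penaltyLinearization xs u.1) :=
    hlinear.add ((((convexOn_penaltyLinearization xs convex_univ).comp_linearMap
      (LinearMap.fst ℝ _ _)).subset (subset_univ K) hKconv).smul ht)
  exact fun u hu' => IsMinOn.of_isLocalMinOn_of_convexOn hu hG hG_convex hu'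

/-- If u* = (x*,y*) is a local minimizer over a convex set K of the
penalized objective F(x,y) = c·x + d·y + t·p(x) with t ≥ 0, then
c·x* + d·y* + t·l_{u*}(x*) ≤ c·x + d·y + t·l_{u*}(x) for all (x,y) ∈ K. -/
theorem stmt_6 (n q : ℕ) (hn : 1 ≤ n)
    (c : Fin n → ℝ) (d : Fin q → ℝ) (t : ℝ) (ht : 0 ≤ t)
    (K : Set ((Fin n → ℝ) × (Fin q → ℝ)))
    (hKne : K.Nonempty) (hKconv : Convex ℝ K)
    (hKbox : ∀ u ∈ K, ∀ i, u.1 i ∈ Set.Icc (0:ℝ) 1)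
    (xs : Fin n → ℝ) (ys : Fin q → ℝ) (hu : (xs, ys) ∈ K)
    (hloc : ∃ r > (0:ℝ), ∀ u ∈ K, ‖u - (xs, ys)‖ < r →
      (∑ i, c i * xs i) + (∑ j, d j * ys j) + t * ∑ i, min (xs i) (1 - xs i)
        ≤ (∑ i, c i * u.1 i) + (∑ j, d j * u.2 j) + t * ∑ i, min (u.1 i) (1 - u.1 i)) :
    ∀ u ∈ K,
      (∑ i, c i * xs i) + (∑ j, d j * ys j)
        + t * (∑ i ∈ univ.filter (fun i => xs i ≤ 1/2), xs i
            + ∑ j ∈ univ.filter (fun j => ¬ xs j ≤ 1/2), (1 - xs j))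
      ≤ (∑ i, c i * u.1 i) + (∑ j, d j * u.2 j)
        + t * (∑ i ∈ univ.filter (fun i => xs i ≤ 1/2), u.1 i
            + ∑ j ∈ univ.filter (fun j => ¬ xs j ≤ 1/2), (1 - u.1 j)) :=
  stmt_6_general n q c d t ht K hKconv xs ys hu hloc
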